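/- arXiv:2505.09232 — 2 statements merged into one kernel-verified Lean document; each statement's English description precedes it below -/
import Mathlib

section
/- Let Σ ⊆ ℝ^d be a closed connected set with finite H^1 measure, let x ∈ Σ, and let Γ ⊆ Σ be homeomorphic to the circle S^1 with x ∈ Γ. Then for every r > 0 smaller than diam(Γ)/2 and every s ∈ (0, r), the sphere ∂B_s(x) intersects Γ in at least two points: H^0(Γ ∩ ∂B_s(x)) ≥ 2. -/
open MeasureTheory Metric

/-! Γ is connected and contains `x` and a point `y` with `s < dist y x`, so the intermediate
value theorem for `dist · x` on Γ gives a point `q ∈ Γ` on the sphere. A circle minus a point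
is still connected, so `Γ \ {q}` again joins `x` to `y` and meets the sphere at a second point. -/

section SphereMinusPoint

variable {E : Type*} [NormedAddCommGroup E] [InnerProductSpace ℝ E]

/-- Stereographic projection from `v` identifies the punctured sphere with a hyperplane. -/
theorem isPreconnected_compl_singleton_sphere (v : sphere (0 : E) 1) :
    IsPreconnected ({v}ᶜ : Set (sphere (0 : E) 1)) := by
  have hv : ‖(v : E)‖ = 1 := norm_eq_of_mem_sphere v
  rw [← stereographic_source hv, ← (stereographic hv).symm_image_target_eq_source,
    stereographic_target hv]
  exact isPreconnected_univ.image _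
    (stereographic_target hv ▸ (stereographic hv).continuousOn_symm)

variable {X : Type*} [TopologicalSpace X]

theorem isPreconnected_of_homeomorph_sphere (hE : 1 < Module.rank ℝ E) {Γ : Set X}
    (e : Γ ≃ₜ sphere (0 : E) 1) : IsPreconnected Γ := by
  have : PreconnectedSpace (sphere (0 : E) 1) :=
    isPreconnected_iff_preconnectedSpace.mp (isPreconnected_sphere hE 0 1)
  have : PreconnectedSpace Γ := e.symm.surjective.denseRange.preconnectedSpace e.symm.continuous
  simpa using isPreconnected_range (continuous_subtype_val : Continuous ((↑) : Γ → X))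

theorem isPreconnected_diff_singleton_of_homeomorph_sphere {Γ : Set X}
    (e : Γ ≃ₜ sphere (0 : E) 1) {q : X} (hq : q ∈ Γ) : IsPreconnected (Γ \ {q}) := by
  have hpunct : IsPreconnected ({⟨q, hq⟩}ᶜ : Set Γ) := by
    rw [← e.isPreconnected_image, Set.image_compl_eq e.bijective, Set.image_singleton]
    exact isPreconnected_compl_singleton_sphere _
  rw [← Set.image_singleton (f := ((↑) : Γ → X)) (a := ⟨q, hq⟩), ← Set.image_val_compl]
  exact hpunct.image _ continuous_subtype_val.continuousOn

end SphereMinusPoint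

section Crossing

variable {α : Type*} [PseudoMetricSpace α]

theorem IsPreconnected.inter_sphere_nonempty {C : Set α} (hC : IsPreconnected C) {x a b : α}
    {s : ℝ} (ha : a ∈ C) (hb : b ∈ C) (has : dist a x ≤ s) (hbs : s ≤ dist b x) :
    (C ∩ sphere x s).Nonempty := by
  obtain ⟨z, hzC, hz⟩ :=
    hC.intermediate_value ha hb (continuous_id.dist continuous_const).continuousOn ⟨has, hbs⟩
  exact ⟨z, hzC, hz⟩

theorem exists_mem_lt_dist_of_two_mul_lt_diam {C : Set α} (x : α) {s : ℝ}
    (hs : 0 ≤ s) (hsC : 2 * s < diam C) : ∃ y ∈ C, s < dist y x := by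
  by_contra! h
  refine hsC.not_ge (diam_le_of_forall_dist_le (by linarith) fun a ha b hb => ?_)
  calc dist a b ≤ dist a x + dist b x := dist_triangle_right a b x
    _ ≤ 2 * s := by linarith [h a ha, h b hb]

end Crossing

theorem stmt11_general {d : ℕ} (Γ : Set (EuclideanSpace ℝ (Fin d)))
    (hloop : Nonempty (Γ ≃ₜ Metric.sphere (0 : EuclideanSpace ℝ (Fin 2)) 1))
    (x : EuclideanSpace ℝ (Fin d)) (hx : x ∈ Γ)
    (r : ℝ) (hrd : r < Metric.diam Γ / 2)
    (s : ℝ) (hs : s ∈ Set.Ioo 0 r) :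
    2 ≤ (Γ ∩ Metric.sphere x s).encard := by
  obtain ⟨e⟩ := hloop
  have hrank : 1 < Module.rank ℝ (EuclideanSpace ℝ (Fin 2)) := by
    rw [← Module.finrank_eq_rank, finrank_euclideanSpace_fin]
    norm_num
  obtain ⟨hs₀, hsr⟩ := hs
  obtain ⟨y, hyΓ, hsy⟩ := exists_mem_lt_dist_of_two_mul_lt_diam x hs₀.le (by linarith)
  have hxs : dist x x < s := by rwa [dist_self]
  obtain ⟨q, hqΓ, hq⟩ := (isPreconnected_of_homeomorph_sphere hrank e).inter_sphere_nonempty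
    hx hyΓ hxs.le hsy.le
  have hne {z} (hz : dist z x ≠ s) : z ≠ q := by rintro rfl; exact hz hq
  obtain ⟨q', ⟨hq'Γ, hq'q⟩, hq'⟩ := (isPreconnected_diff_singleton_of_homeomorph_sphere e hqΓ)
    |>.inter_sphere_nonempty ⟨hx, hne hxs.ne⟩ ⟨hyΓ, hne hsy.ne'⟩ hxs.le hsy.le
  have hcross : 1 < (Γ ∩ sphere x s).encard :=
    Set.one_lt_encard_iff.mpr ⟨q, q', ⟨hqΓ, hq⟩, ⟨hq'Γ, hq'⟩, fun h => hq'q h.symm⟩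
  exact Order.add_one_le_of_lt hcross

/-- A loop (a subset homeomorphic to `S¹`) through `x` crosses every sufficiently small
sphere around `x` in at least two points. -/
theorem stmt11 {d : ℕ} (S Γ : Set (EuclideanSpace ℝ (Fin d)))
    (hS : IsClosed S) (hSconn : IsConnected S) (hfin : μH[1] S ≠ ⊤)
    (hΓS : Γ ⊆ S)
    (hloop : Nonempty (Γ ≃ₜ Metric.sphere (0 : EuclideanSpace ℝ (Fin 2)) 1))
    (x : EuclideanSpace ℝ (Fin d)) (hx : x ∈ Γ)
    (r : ℝ) (hr : 0 < r) (hrd : r < Metric.diam Γ / 2)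
    (s : ℝ) (hs : s ∈ Set.Ioo 0 r) :
    2 ≤ (Γ ∩ Metric.sphere x s).encard :=
  stmt11_general Γ hloop x hx r hrd s hs
end

section
/- Let Σ ⊆ ℝ^d be a closed connected set, x ∈ Σ, and r > 0 such that Σ ∩ ∂B_r(x) consists of exactly two points {y₁, y₂}, Σ ∩ B̄_r(x) is connected, and there exists an arc Γ' ⊆ Σ \ B_r(x) joining y₁ to y₂. Then Σ \ B_r(x) is connected. -/
/-!
Cut `S` along the sphere into `A = S \ B_r(x)` and `S ∩ B̄_r(x)`: two closed sets whose union `S`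
is connected and whose intersection `{y₁, y₂}` lies on the arc `Γ' ⊆ A`. A separation of `A` by
disjoint closed sets leaves `Γ'` on one side, and adding `S ∩ B̄_r(x)` to that side would then
separate `S`.
-/

open Metric Set

theorem IsPreconnected.left_of_union_of_isClosed {X : Type*} [TopologicalSpace X]
    {a b c : Set X} (hab : IsPreconnected (a ∪ b)) (ha : IsClosed a) (hb : IsClosed b)
    (hc : IsPreconnected c) (hca : c ⊆ a) (hinter : a ∩ b ⊆ c) : IsPreconnected a := by
  rw [isPreconnected_iff_subset_of_fully_disjoint_closed ha]
  intro u v hu hv hauv huv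
  have hc_uv : c ⊆ u ∨ c ⊆ v := isPreconnected_iff_subset_of_disjoint_closed.mp hc u v hu hv
    (hca.trans hauv) (by rw [huv.inter_eq, inter_empty])
  wlog hcu : c ⊆ u generalizing u v
  · exact (this v u hv hu (union_comm u v ▸ hauv) huv.symm hc_uv.symm
      (hc_uv.resolve_left hcu)).symm
  have hdisj : (a ∪ b) ∩ ((u ∪ b) ∩ (v ∩ a)) = ∅ := by
    refine eq_empty_of_forall_notMem fun z ⟨_, hzub, hzv, hza⟩ => ?_
    have hzu : z ∈ u := hzub.elim id fun hzb => hcu (hinter ⟨hza, hzb⟩)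
    exact huv.notMem_of_mem_left hzu hzv
  have hcover : a ∪ b ⊆ (u ∪ b) ∪ (v ∩ a) := by
    rintro z (hza | hzb)
    · exact (hauv hza).elim (fun hzu => Or.inl (Or.inl hzu)) fun hzv => Or.inr ⟨hzv, hza⟩
    · exact Or.inl (Or.inr hzb)
  rcases isPreconnected_iff_subset_of_disjoint_closed.mp hab _ _ (hu.union hb) (hv.inter ha)
    hcover hdisj with h | h
  · exact Or.inl fun z hza =>
      (h (Or.inl hza)).elim id fun hzb => hcu (hinter ⟨hza, hzb⟩)
  · exact Or.inr fun z hza => (h (Or.inl hza)).1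

theorem stmt12_general {d : ℕ} (S : Set (EuclideanSpace ℝ (Fin d)))
    (hS : IsClosed S) (hconn : IsConnected S)
    (x : EuclideanSpace ℝ (Fin d)) (r : ℝ)
    (y₁ y₂ : EuclideanSpace ℝ (Fin d))
    (hsph : S ∩ Metric.sphere x r = {y₁, y₂})
    (harc : JoinedIn (S \ Metric.ball x r) y₁ y₂) :
    IsConnected (S \ Metric.ball x r) := by
  let γ := harc.somePath
  have hunion : S \ ball x r ∪ S ∩ closedBall x r = S := by
    refine (union_subset sdiff_subset inter_subset_left).antisymm fun z hzS => ?_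
    by_cases hzb : z ∈ ball x r
    · exact Or.inr ⟨hzS, ball_subset_closedBall hzb⟩
    · exact Or.inl ⟨hzS, hzb⟩
  have hinter : S \ ball x r ∩ (S ∩ closedBall x r) ⊆ range γ := by
    rintro z ⟨⟨hzS, hzb⟩, -, hzcb⟩
    have hz : z ∈ S ∩ sphere x r := ⟨hzS, by rw [← closedBall_sdiff_ball]; exact ⟨hzcb, hzb⟩⟩
    rw [hsph] at hz
    rcases hz with rfl | rfl
    · exact ⟨0, γ.source⟩
    · exact ⟨1, γ.target⟩
  refine ⟨⟨y₁, harc.mem.1⟩, ?_⟩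
  refine (hunion ▸ hconn.isPreconnected).left_of_union_of_isClosed (hS.sdiff isOpen_ball)
    (hS.inter isClosed_closedBall) (isConnected_range γ.continuous).isPreconnected ?_ hinter
  rintro _ ⟨t, rfl⟩
  exact harc.somePath_mem t

/-- Connectivity preservation: if `S ∩ ∂B_r(x) = {y₁, y₂}`, `S ∩ B̄_r(x)` is connected and
there is an arc in `S \ B_r(x)` joining `y₁` to `y₂`, then `S \ B_r(x)` is connected. -/
theorem stmt12 {d : ℕ} (S : Set (EuclideanSpace ℝ (Fin d)))
    (hS : IsClosed S) (hconn : IsConnected S)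
    (x : EuclideanSpace ℝ (Fin d)) (r : ℝ) (hr : 0 < r)
    (y₁ y₂ : EuclideanSpace ℝ (Fin d))
    (hsph : S ∩ Metric.sphere x r = {y₁, y₂})
    (hball : IsConnected (S ∩ Metric.closedBall x r))
    (harc : JoinedIn (S \ Metric.ball x r) y₁ y₂) :
    IsConnected (S \ Metric.ball x r) :=
  stmt12_general S hS hconn x r y₁ y₂ hsph harc
end
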